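/- arXiv:2303.08633 — 2 statements merged into one kernel-verified Lean document; each statement's English description precedes it below -/
import Mathlib

section
/- Monotonicity of mixtures: let p, q : W → S be continuous maps into the standard simplex S = Δⁿ ⊆ ℝⁿ, ordered by a relation ≺ on continuous maps W → S satisfying independence (for continuous a : W → (0,1] and any r, p ≺ q implies ap+(1-a)r ≺ aq+(1-a)r, where mixtures are pointwise convex combinations). If a, b : W → [0,1] are continuous with a(x) < b(x) for all x ∈ W and p ≺ q, then a·q + (1-a)·p ≺ b·q + (1-b)·p. -/
/-- Monotonicity of mixtures (Lemma 1): for a relation `≺` on continuous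
simplex-valued maps satisfying the independence axiom, if `p ≺ q` and
`a < b` pointwise with `a, b : W → [0,1]` continuous, then
`a·q + (1-a)·p ≺ b·q + (1-b)·p`. -/
theorem mixture_monotonicity {W : Type*} [TopologicalSpace W] {n : ℕ}
    (prec : (W → (Fin n → ℝ)) → (W → (Fin n → ℝ)) → Prop)
    (hindep : ∀ (a : W → ℝ), Continuous a → (∀ x, a x ∈ Set.Ioc (0 : ℝ) 1) →
      ∀ p q r : W → (Fin n → ℝ), Continuous p → Continuous q → Continuous r →
        (∀ x, p x ∈ stdSimplex ℝ (Fin n)) → (∀ x, q x ∈ stdSimplex ℝ (Fin n)) →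
        (∀ x, r x ∈ stdSimplex ℝ (Fin n)) →
        prec p q →
          prec (fun x => a x • p x + (1 - a x) • r x)
               (fun x => a x • q x + (1 - a x) • r x))
    (p q : W → (Fin n → ℝ)) (hp : Continuous p) (hq : Continuous q)
    (hps : ∀ x, p x ∈ stdSimplex ℝ (Fin n)) (hqs : ∀ x, q x ∈ stdSimplex ℝ (Fin n))
    (a b : W → ℝ) (ha : Continuous a) (hb : Continuous b)
    (ha01 : ∀ x, a x ∈ Set.Icc (0 : ℝ) 1) (hb01 : ∀ x, b x ∈ Set.Icc (0 : ℝ) 1)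
    (hab : ∀ x, a x < b x) (hpq : prec p q) :
    prec (fun x => a x • q x + (1 - a x) • p x)
         (fun x => b x • q x + (1 - b x) • p x) := by
  have bpos : ∀ x, 0 < b x := fun x => lt_of_le_of_lt (ha01 x).1 (hab x)
  set s : W → (Fin n → ℝ) := fun x => b x • q x + (1 - b x) • p x with hs_def
  have hscont : Continuous s := (hb.smul hq).add ((continuous_const.sub hb).smul hp)
  have hss : ∀ x, s x ∈ stdSimplex ℝ (Fin n) := fun x =>
    (convex_stdSimplex ℝ (Fin n)) (hqs x) (hps x) (hb01 x).1 (by linarith [(hb01 x).2]) (by ring)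
  -- Step 1: p ≺ s
  have step1 : prec p s := by
    have h := hindep b hb (fun x => ⟨bpos x, (hb01 x).2⟩) p q p hp hq hp hps hqs hps hpq
    have heq : (fun x => b x • p x + (1 - b x) • p x) = p := by
      funext x; ext i; simp [Pi.smul_apply]; ring
    rwa [heq] at h
  -- Step 2: mix p and s with coefficient t = 1 - a/b, r = s
  set t : W → ℝ := fun x => 1 - a x / b x with ht_def
  have htc : Continuous t := continuous_const.sub (ha.div hb fun x => (bpos x).ne')
  have ht01 : ∀ x, t x ∈ Set.Ioc (0 : ℝ) 1 := by
    intro x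
    constructor
    · have : a x / b x < 1 := (div_lt_one (bpos x)).2 (hab x)
      simp [ht_def]; linarith
    · have : 0 ≤ a x / b x := div_nonneg (ha01 x).1 (bpos x).le
      simp [ht_def]; linarith
  have h2 := hindep t htc ht01 p s s hp hscont hscont hps hss hss step1
  have heqR : (fun x => t x • s x + (1 - t x) • s x) = s := by
    funext x; ext i; simp [Pi.smul_apply]; ring
  have heqL : (fun x => t x • p x + (1 - t x) • s x) =
      (fun x => a x • q x + (1 - a x) • p x) := by
    funext x
    have hbne : b x ≠ 0 := (bpos x).ne'
    ext i
    simp only [ht_def, hs_def, Pi.add_apply, Pi.smul_apply, smul_eq_mul]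
    field_simp
    ring
  rw [heqR, heqL] at h2
  exact h2
end

section
/- Uniqueness up to positive linear transformation: let W be a topological space, S = Δⁿ, and suppose v, w : C(W,S) → C(W,ℝ) are affine maps (v(a·p+(1-a)·q) = a·v(p)+(1-a)·v(q) and similarly for w, for continuous a : W → [0,1]) that both represent the same relation ≺ in the sense that p ≺ q ⟺ v(p)(x) < v(q)(x) for all x ∈ W ⟺ w(p)(x) < w(q)(x) for all x ∈ W. If there exist f, g ∈ C(W,S) with f ≺ g, then there exist continuous α, β : W → ℝ with α(x) > 0 for all x such that w(r) = α·v(r) + β for every r ∈ C(W,S) lying in the order interval [f,g]. -/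
/-!
At each point `x₀`, `w r x₀` depends only on `v r x₀`: if `v p x₀ = v q x₀` but `w p x₀ < w q x₀`,
mixing `q` towards `f` and `p` towards `g` with a continuous weight that equals a small `ε₀`
at `x₀` and is large wherever `v p < v q` yields a pair strictly ordered by `v` everywhere,
yet not by `w` at `x₀`. The induced map between the values of `v` and of `w` at `x₀` is affine
on an interval containing `v f x₀ < v g x₀`, hence the line through its values at `f` and `g`.
-/

open Set

namespace AffineRepresentation

section Mixing

variable {W E : Type*} [TopologicalSpace W] [AddCommGroup E] [Module ℝ E]

def mix (a : W → ℝ) (p q : W → E) : W → E := fun y => a y • p y + (1 - a y) • q y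

def MixAffineOn (M : Set (W → E)) (v : (W → E) → W → ℝ) : Prop :=
  ∀ a : W → ℝ, Continuous a → (∀ x, a x ∈ Icc (0 : ℝ) 1) →
    ∀ p ∈ M, ∀ q ∈ M, ∀ x, v (mix a p q) x = a x * v p x + (1 - a x) * v q x

theorem MixAffineOn.apply_smul_add {M : Set (W → E)} {v : (W → E) → W → ℝ}
    (hv : MixAffineOn M v) {p q : W → E} (hp : p ∈ M) (hq : q ∈ M) {a : ℝ}
    (ha : a ∈ Icc (0 : ℝ) 1) (x : W) :
    v (a • p + (1 - a) • q) x = a * v p x + (1 - a) * v q x :=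
  hv (fun _ => a) continuous_const (fun _ => ha) p hp q hq x

variable [TopologicalSpace E]

def continuousMapsInto (W : Type*) [TopologicalSpace W] (K : Set E) : Set (W → E) :=
  {p | Continuous p ∧ ∀ x, p x ∈ K}

variable [ContinuousAdd E] [ContinuousSMul ℝ E] {K : Set E}

theorem mix_mem (hK : Convex ℝ K) {a : W → ℝ} (ha : Continuous a)
    (ha01 : ∀ x, a x ∈ Icc (0 : ℝ) 1) {p q : W → E} (hp : p ∈ continuousMapsInto W K)
    (hq : q ∈ continuousMapsInto W K) : mix a p q ∈ continuousMapsInto W K :=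
  ⟨(ha.smul hp.1).add ((continuous_const.sub ha).smul hq.1), fun x =>
    hK (hp.2 x) (hq.2 x) (ha01 x).1 (sub_nonneg.2 (ha01 x).2) (add_sub_cancel _ _)⟩

theorem convex_continuousMapsInto (hK : Convex ℝ K) :
    Convex ℝ (continuousMapsInto W K) := by
  intro p hp q hq a b ha hb hab
  obtain rfl : b = 1 - a := by linarith
  exact mix_mem hK continuous_const (fun _ => ⟨ha, by linarith⟩) hp hq

end Mixing

theorem exists_continuous_weight {W : Type*} [TopologicalSpace W] {d δ : W → ℝ}
    (hd : Continuous d) (hδ : Continuous δ) (hδpos : ∀ x, 0 < δ x) {ε₀ : ℝ}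
    (hε₀ : ε₀ ∈ Ioc (0 : ℝ) 1) {x₀ : W} (hx₀ : 0 ≤ d x₀) :
    ∃ ε : W → ℝ, Continuous ε ∧ (∀ x, ε x ∈ Icc (0 : ℝ) 1) ∧ ε x₀ = ε₀ ∧
      ∀ x, 0 < ε x * δ x + (1 - ε x) * d x := by
  set m : W → ℝ := fun x => max 0 (-d x)
  have hm₀ : ∀ x, 0 ≤ m x := fun x => le_max_left _ _
  have hmd : ∀ x, -d x ≤ m x := fun x => le_max_right _ _
  have hden : ∀ x, 0 < m x + δ x := fun x => add_pos_of_nonneg_of_pos (hm₀ x) (hδpos x)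
  -- chosen so that `ε * δ - (1 - ε) * m = ε₀ * δ`
  set ε : W → ℝ := fun x => (m x + ε₀ * δ x) / (m x + δ x)
  have hε : ∀ x, ε x * (m x + δ x) = m x + ε₀ * δ x := fun x => div_mul_cancel₀ _ (hden x).ne'
  have hε₁ : ∀ x, ε x ≤ 1 := fun x => (div_le_one (hden x)).2 (by nlinarith [hδpos x, hε₀.2])
  have hmc : Continuous m := continuous_const.max hd.neg
  refine ⟨ε, (hmc.add (continuous_const.mul hδ)).div (hmc.add hδ) fun x => (hden x).ne',
    fun x => ⟨div_nonneg (by nlinarith [hm₀ x, hδpos x, hε₀.1]) (hden x).le, hε₁ x⟩, ?_,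
    fun x => ?_⟩
  · simp [ε, m, max_eq_left (neg_nonpos.2 hx₀), (hδpos x₀).ne']
  · nlinarith [mul_le_mul_of_nonneg_left (hmd x) (sub_nonneg.2 (hε₁ x)), hε x,
      mul_pos hε₀.1 (hδpos x)]

section Level

variable {W E : Type*} [TopologicalSpace W] [AddCommGroup E] [Module ℝ E] [TopologicalSpace E]
  [ContinuousAdd E] [ContinuousSMul ℝ E] {K : Set E} {v w : (W → E) → W → ℝ} {f g p q : W → E}

theorem apply_le_of_apply_eq (hK : Convex ℝ K)
    (hvw : ∀ p ∈ continuousMapsInto W K, ∀ q ∈ continuousMapsInto W K,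
      (∀ x, v p x < v q x) → ∀ x, w p x < w q x)
    (hvaff : MixAffineOn (continuousMapsInto W K) v)
    (hwaff : MixAffineOn (continuousMapsInto W K) w)
    (hvcont : ∀ p ∈ continuousMapsInto W K, Continuous (v p))
    (hf : f ∈ continuousMapsInto W K) (hg : g ∈ continuousMapsInto W K)
    (hfg : ∀ x, v f x < v g x) (hp : p ∈ continuousMapsInto W K)
    (hq : q ∈ continuousMapsInto W K) {x₀ : W} (hpq : v p x₀ = v q x₀) :
    w q x₀ ≤ w p x₀ := by
  by_contra! hlt
  set κ := w g x₀ - w f x₀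
  set c := w q x₀ - w p x₀
  have hκ : 0 < κ := sub_pos.2 (hvw f hf g hg hfg x₀)
  have hc : 0 < c := sub_pos.2 hlt
  set ε₀ := c / (κ + c)
  have hε₀ : ε₀ * (κ + c) = c := div_mul_cancel₀ _ (by positivity)
  obtain ⟨ε, hεc, hε01, hεx₀, hεpos⟩ := exists_continuous_weight (x₀ := x₀) (ε₀ := ε₀)
    (d := fun x => v p x - v q x) (δ := fun x => v g x - v f x)
    ((hvcont p hp).sub (hvcont q hq)) ((hvcont g hg).sub (hvcont f hf))
    (fun x => sub_pos.2 (hfg x))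
    ⟨by positivity, (div_le_one (by positivity)).2 (by linarith)⟩ (by simp [hpq])
  have hw := hvw (mix ε f q) (mix_mem hK hεc hε01 hf hq) (mix ε g p) (mix_mem hK hεc hε01 hg hp)
    (fun x => by rw [hvaff ε hεc hε01 f hf q hq, hvaff ε hεc hε01 g hg p hp]; linarith [hεpos x])
    x₀
  rw [hwaff ε hεc hε01 f hf q hq, hwaff ε hεc hε01 g hg p hp, hεx₀] at hw
  linarith

end Level

section Collinear

theorem mem_uIcc_or_mem_uIcc_or_mem_uIcc {α : Type*} [LinearOrder α] (x y z : α) :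
    y ∈ uIcc x z ∨ x ∈ uIcc y z ∨ z ∈ uIcc x y := by
  simp only [mem_uIcc]
  rcases le_total x y with h₁ | h₁ <;> rcases le_total y z with h₂ | h₂ <;>
    rcases le_total x z with h₃ | h₃ <;> tauto

variable {E : Type*} [AddCommGroup E] [Module ℝ E] {s : Set E} {V Φ : E → ℝ} {p q r : E}

theorem collinear_of_mem_uIcc (hs : Convex ℝ s)
    (hV : ∀ p ∈ s, ∀ q ∈ s, ∀ a ∈ Icc (0 : ℝ) 1, V (a • p + (1 - a) • q) = a * V p + (1 - a) * V q)
    (hΦ : ∀ p ∈ s, ∀ q ∈ s, ∀ a ∈ Icc (0 : ℝ) 1, Φ (a • p + (1 - a) • q) = a * Φ p + (1 - a) * Φ q)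
    (hlevel : ∀ p ∈ s, ∀ q ∈ s, V p = V q → Φ p = Φ q)
    (hp : p ∈ s) (hq : q ∈ s) (hr : r ∈ s) (hpqr : V q ∈ uIcc (V p) (V r)) :
    (Φ q - Φ p) * (V r - V p) = (Φ r - Φ p) * (V q - V p) := by
  rw [← segment_eq_uIcc, segment_eq_image] at hpqr
  obtain ⟨a, ha, hVq⟩ := hpqr
  have hΦq : Φ q = a * Φ r + (1 - a) * Φ p :=
    (hlevel q hq _ (hs hr hp ha.1 (sub_nonneg.2 ha.2) (add_sub_cancel _ _))
      (by rw [hV r hr p hp a ha, ← hVq]; simp only [smul_eq_mul]; ring)).trans (hΦ r hr p hp a ha)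
  simp only [smul_eq_mul] at hVq
  rw [hΦq, ← hVq]
  ring

theorem collinear (hs : Convex ℝ s)
    (hV : ∀ p ∈ s, ∀ q ∈ s, ∀ a ∈ Icc (0 : ℝ) 1, V (a • p + (1 - a) • q) = a * V p + (1 - a) * V q)
    (hΦ : ∀ p ∈ s, ∀ q ∈ s, ∀ a ∈ Icc (0 : ℝ) 1, Φ (a • p + (1 - a) • q) = a * Φ p + (1 - a) * Φ q)
    (hlevel : ∀ p ∈ s, ∀ q ∈ s, V p = V q → Φ p = Φ q)
    (hp : p ∈ s) (hq : q ∈ s) (hr : r ∈ s) :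
    (Φ q - Φ p) * (V r - V p) = (Φ r - Φ p) * (V q - V p) := by
  -- the difference of the two sides is alternating in `p, q, r`
  rcases mem_uIcc_or_mem_uIcc_or_mem_uIcc (V p) (V q) (V r) with h | h | h
  · exact collinear_of_mem_uIcc hs hV hΦ hlevel hp hq hr h
  · linear_combination -(collinear_of_mem_uIcc hs hV hΦ hlevel hq hp hr h)
  · linear_combination -(collinear_of_mem_uIcc hs hV hΦ hlevel hp hr hq h)

end Collinear

end AffineRepresentation

/-- Uniqueness up to positive linear transformation (Lemma 6): two affine
representations `v, w` of the same relation `≺` (as pointwise strict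
inequality of the representing continuous functions) agree up to a continuous
positive linear transformation on the order interval `[f,g]`, whenever some
pair `f ≺ g` exists. -/
theorem representation_unique_up_to_plt {W : Type*} [TopologicalSpace W] {n : ℕ}
    (prec : (W → (Fin n → ℝ)) → (W → (Fin n → ℝ)) → Prop)
    (v w : (W → (Fin n → ℝ)) → (W → ℝ))
    (hvrep : ∀ p q : W → (Fin n → ℝ), Continuous p → Continuous q →
      (∀ x, p x ∈ stdSimplex ℝ (Fin n)) → (∀ x, q x ∈ stdSimplex ℝ (Fin n)) →
      (prec p q ↔ ∀ x, v p x < v q x))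
    (hwrep : ∀ p q : W → (Fin n → ℝ), Continuous p → Continuous q →
      (∀ x, p x ∈ stdSimplex ℝ (Fin n)) → (∀ x, q x ∈ stdSimplex ℝ (Fin n)) →
      (prec p q ↔ ∀ x, w p x < w q x))
    (hvaff : ∀ (a : W → ℝ), Continuous a → (∀ x, a x ∈ Set.Icc (0 : ℝ) 1) →
      ∀ p q : W → (Fin n → ℝ), Continuous p → Continuous q →
        (∀ x, p x ∈ stdSimplex ℝ (Fin n)) → (∀ x, q x ∈ stdSimplex ℝ (Fin n)) →
        ∀ x, v (fun y => a y • p y + (1 - a y) • q y) x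
              = a x * v p x + (1 - a x) * v q x)
    (hwaff : ∀ (a : W → ℝ), Continuous a → (∀ x, a x ∈ Set.Icc (0 : ℝ) 1) →
      ∀ p q : W → (Fin n → ℝ), Continuous p → Continuous q →
        (∀ x, p x ∈ stdSimplex ℝ (Fin n)) → (∀ x, q x ∈ stdSimplex ℝ (Fin n)) →
        ∀ x, w (fun y => a y • p y + (1 - a y) • q y) x
              = a x * w p x + (1 - a x) * w q x)
    (hvcont : ∀ p : W → (Fin n → ℝ), Continuous p →
      (∀ x, p x ∈ stdSimplex ℝ (Fin n)) → Continuous (v p))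
    (hwcont : ∀ p : W → (Fin n → ℝ), Continuous p →
      (∀ x, p x ∈ stdSimplex ℝ (Fin n)) → Continuous (w p))
    (f g : W → (Fin n → ℝ)) (hfc : Continuous f) (hgc : Continuous g)
    (hfs : ∀ x, f x ∈ stdSimplex ℝ (Fin n)) (hgs : ∀ x, g x ∈ stdSimplex ℝ (Fin n))
    (hfg : prec f g) :
    ∃ α β : W → ℝ, Continuous α ∧ Continuous β ∧ (∀ x, 0 < α x) ∧
      ∀ r : W → (Fin n → ℝ), Continuous r → (∀ x, r x ∈ stdSimplex ℝ (Fin n)) →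
        ¬ prec r f → ¬ prec g r →
        ∀ x, w r x = α x * v r x + β x := by
  open AffineRepresentation in
  set M := continuousMapsInto W (stdSimplex ℝ (Fin n))
  have hK := convex_stdSimplex ℝ (Fin n)
  have hf : f ∈ M := ⟨hfc, hfs⟩
  have hg : g ∈ M := ⟨hgc, hgs⟩
  have hvaff' : MixAffineOn M v := fun a ha ha01 p hp q hq =>
    hvaff a ha ha01 p q hp.1 hq.1 hp.2 hq.2
  have hwaff' : MixAffineOn M w := fun a ha ha01 p hp q hq =>
    hwaff a ha ha01 p q hp.1 hq.1 hp.2 hq.2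
  have hvcont' : ∀ p ∈ M, Continuous (v p) := fun p hp => hvcont p hp.1 hp.2
  have hvw : ∀ p ∈ M, ∀ q ∈ M, (∀ x, v p x < v q x) → ∀ x, w p x < w q x := fun p hp q hq h =>
    (hwrep p q hp.1 hq.1 hp.2 hq.2).1 ((hvrep p q hp.1 hq.1 hp.2 hq.2).2 h)
  have hvfg := (hvrep f g hfc hgc hfs hgs).1 hfg
  have hwfg := (hwrep f g hfc hgc hfs hgs).1 hfg
  have hlevel : ∀ x₀, ∀ p ∈ M, ∀ q ∈ M, v p x₀ = v q x₀ → w p x₀ = w q x₀ :=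
    fun x₀ p hp q hq h => le_antisymm
      (apply_le_of_apply_eq hK hvw hvaff' hwaff' hvcont' hf hg hvfg hq hp h.symm)
      (apply_le_of_apply_eq hK hvw hvaff' hwaff' hvcont' hf hg hvfg hp hq h)
  have hδ : ∀ x, v g x - v f x ≠ 0 := fun x => (sub_pos.2 (hvfg x)).ne'
  have hα : Continuous fun x => (w g x - w f x) / (v g x - v f x) :=
    ((hwcont g hgc hgs).sub (hwcont f hfc hfs)).div (hvcont' g hg |>.sub (hvcont' f hf)) hδ
  refine ⟨fun x => (w g x - w f x) / (v g x - v f x),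
    fun x => w f x - v f x * ((w g x - w f x) / (v g x - v f x)), hα,
    (hwcont f hfc hfs).sub ((hvcont' f hf).mul hα),
    fun x => div_pos (sub_pos.2 (hwfg x)) (sub_pos.2 (hvfg x)), fun r hrc hrs _ _ x => ?_⟩
  have hcol := collinear (convex_continuousMapsInto hK)
    (fun p hp q hq a ha => hvaff'.apply_smul_add hp hq ha x)
    (fun p hp q hq a ha => hwaff'.apply_smul_add hp hq ha x) (hlevel x) hf hg ⟨hrc, hrs⟩
  field_simp [hδ x]
  linear_combination -hcol
end
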